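/- arXiv:2604.18544 — 6 statements merged into one kernel-verified Lean document; each statement's English description precedes it below -/
import Mathlib

section
/- Let p > 1 be a real number with p ≠ 2, and let a, b be real numbers. If p > 2 then |a+b|^p + |a-b|^p ≥ 2(|a|^p + |b|^p), and if 1 < p < 2 then |a+b|^p + |a-b|^p ≤ 2(|a|^p + |b|^p). -/
/-! Put `r = p / 2`, so that `|x| ^ p = (x ^ 2) ^ r`. The squares satisfy the parallelogram law
`((a + b) ^ 2 + (a - b) ^ 2) / 2 = a ^ 2 + b ^ 2`. For `r ≥ 1` the map `t ↦ t ^ r` is convex and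
superadditive on `[0, ∞)`, so
`(a ^ 2) ^ r + (b ^ 2) ^ r ≤ (a ^ 2 + b ^ 2) ^ r ≤ (((a + b) ^ 2) ^ r + ((a - b) ^ 2) ^ r) / 2`;
for `0 ≤ r ≤ 1` it is concave and subadditive, and both inequalities reverse. -/

open Real

lemma abs_rpow_eq_sq_rpow_half (a p : ℝ) : |a| ^ p = (a ^ 2) ^ (p / 2) := by
  rw [← sq_abs, ← rpow_natCast, ← rpow_mul (abs_nonneg a)]
  congr 1
  ring

lemma two_mul_rpow_midpoint_le_add_rpow {r u v : ℝ} (hr : 1 ≤ r) (hu : 0 ≤ u) (hv : 0 ≤ v) :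
    2 * ((u + v) / 2) ^ r ≤ u ^ r + v ^ r := by
  have h := (convexOn_rpow hr).2 (Set.mem_Ici.2 hu) (Set.mem_Ici.2 hv)
    (by norm_num : (0 : ℝ) ≤ 1 / 2) (by norm_num : (0 : ℝ) ≤ 1 / 2) (add_halves 1)
  simp only [smul_eq_mul, show 1 / 2 * u + 1 / 2 * v = (u + v) / 2 by ring] at h
  linarith

lemma add_rpow_le_two_mul_rpow_midpoint {r u v : ℝ} (hr₀ : 0 ≤ r) (hr₁ : r ≤ 1) (hu : 0 ≤ u)
    (hv : 0 ≤ v) : u ^ r + v ^ r ≤ 2 * ((u + v) / 2) ^ r := by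
  have h := (concaveOn_rpow hr₀ hr₁).2 (Set.mem_Ici.2 hu) (Set.mem_Ici.2 hv)
    (by norm_num : (0 : ℝ) ≤ 1 / 2) (by norm_num : (0 : ℝ) ≤ 1 / 2) (add_halves 1)
  simp only [smul_eq_mul, show 1 / 2 * u + 1 / 2 * v = (u + v) / 2 by ring] at h
  linarith

lemma clarkson_sq_rpow_of_one_le {r : ℝ} (hr : 1 ≤ r) (a b : ℝ) :
    2 * ((a ^ 2) ^ r + (b ^ 2) ^ r) ≤ ((a + b) ^ 2) ^ r + ((a - b) ^ 2) ^ r := by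
  have parallelogram : ((a + b) ^ 2 + (a - b) ^ 2) / 2 = a ^ 2 + b ^ 2 := by ring
  calc 2 * ((a ^ 2) ^ r + (b ^ 2) ^ r) ≤ 2 * (a ^ 2 + b ^ 2) ^ r := by
        gcongr; exact add_rpow_le_rpow_add (sq_nonneg a) (sq_nonneg b) hr
    _ = 2 * (((a + b) ^ 2 + (a - b) ^ 2) / 2) ^ r := by rw [parallelogram]
    _ ≤ ((a + b) ^ 2) ^ r + ((a - b) ^ 2) ^ r :=
        two_mul_rpow_midpoint_le_add_rpow hr (sq_nonneg _) (sq_nonneg _)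

lemma clarkson_sq_rpow_of_le_one {r : ℝ} (hr₀ : 0 ≤ r) (hr₁ : r ≤ 1) (a b : ℝ) :
    ((a + b) ^ 2) ^ r + ((a - b) ^ 2) ^ r ≤ 2 * ((a ^ 2) ^ r + (b ^ 2) ^ r) := by
  have parallelogram : ((a + b) ^ 2 + (a - b) ^ 2) / 2 = a ^ 2 + b ^ 2 := by ring
  calc ((a + b) ^ 2) ^ r + ((a - b) ^ 2) ^ r ≤ 2 * (((a + b) ^ 2 + (a - b) ^ 2) / 2) ^ r :=
        add_rpow_le_two_mul_rpow_midpoint hr₀ hr₁ (sq_nonneg _) (sq_nonneg _)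
    _ = 2 * (a ^ 2 + b ^ 2) ^ r := by rw [parallelogram]
    _ ≤ 2 * ((a ^ 2) ^ r + (b ^ 2) ^ r) := by
        gcongr; exact rpow_add_le_add_rpow (sq_nonneg a) (sq_nonneg b) hr₀ hr₁

theorem clarkson_scalar_general (p a b : ℝ) (hp1 : 1 < p) :
    (2 < p → 2 * (|a| ^ p + |b| ^ p) ≤ |a + b| ^ p + |a - b| ^ p) ∧
    (p < 2 → |a + b| ^ p + |a - b| ^ p ≤ 2 * (|a| ^ p + |b| ^ p)) := by
  simp only [abs_rpow_eq_sq_rpow_half]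
  exact ⟨fun hp => clarkson_sq_rpow_of_one_le (by linarith) a b,
    fun hp => clarkson_sq_rpow_of_le_one (by linarith) (by linarith) a b⟩

/-- Clarkson-type scalar inequalities: for real `p > 1`, `p ≠ 2`,
`|a+b|^p + |a-b|^p ≥ 2(|a|^p + |b|^p)` when `p > 2`, and the reverse when `1 < p < 2`. -/
theorem clarkson_scalar (p a b : ℝ) (hp1 : 1 < p) (hp2 : p ≠ 2) :
    (2 < p → 2 * (|a| ^ p + |b| ^ p) ≤ |a + b| ^ p + |a - b| ^ p) ∧
    (p < 2 → |a + b| ^ p + |a - b| ^ p ≤ 2 * (|a| ^ p + |b| ^ p)) :=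
  clarkson_scalar_general p a b hp1
end

section
/- Let p > 1 be a real number with p ≠ 2, and let a, b be real numbers. Then |a+b|^p + |a-b|^p = 2(|a|^p + |b|^p) holds if and only if a = 0 or b = 0. -/
/-!
Put `q = p / 2`, so that `|c| ^ p = (c ^ 2) ^ q`, and note that `a ^ 2 + b ^ 2` is the midpoint of
`(a + b) ^ 2` and `(a - b) ^ 2`. For `p > 2` the map `t ↦ t ^ q` is convex and strictly
superadditive on `[0, ∞)`, hence
`2 (|a| ^ p + |b| ^ p) < 2 (a ^ 2 + b ^ 2) ^ q ≤ |a + b| ^ p + |a - b| ^ p` when `a, b ≠ 0`;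
for `p < 2` it is concave and strictly subadditive, and both inequalities reverse.
-/

namespace Real

private lemma rpow_eq_mul_rpow_sub_one {x : ℝ} (hx : 0 < x) (q : ℝ) : x ^ q = x * x ^ (q - 1) := by
  rw [rpow_sub_one hx.ne', mul_div_cancel₀ _ hx.ne']

lemma add_rpow_lt_rpow_add {q x y : ℝ} (hq : 1 < q) (hx : 0 < x) (hy : 0 < y) :
    x ^ q + y ^ q < (x + y) ^ q := by
  have hx' : x ^ (q - 1) < (x + y) ^ (q - 1) := rpow_lt_rpow hx.le (by linarith) (by linarith)
  have hy' : y ^ (q - 1) < (x + y) ^ (q - 1) := rpow_lt_rpow hy.le (by linarith) (by linarith)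
  rw [rpow_eq_mul_rpow_sub_one hx, rpow_eq_mul_rpow_sub_one hy,
    rpow_eq_mul_rpow_sub_one (add_pos hx hy), add_mul]
  gcongr

lemma rpow_add_lt_add_rpow {q x y : ℝ} (hq : q < 1) (hx : 0 < x) (hy : 0 < y) :
    (x + y) ^ q < x ^ q + y ^ q := by
  have hx' : (x + y) ^ (q - 1) < x ^ (q - 1) := rpow_lt_rpow_of_neg hx (by linarith) (by linarith)
  have hy' : (x + y) ^ (q - 1) < y ^ (q - 1) := rpow_lt_rpow_of_neg hy (by linarith) (by linarith)
  rw [rpow_eq_mul_rpow_sub_one hx, rpow_eq_mul_rpow_sub_one hy,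
    rpow_eq_mul_rpow_sub_one (add_pos hx hy), add_mul]
  gcongr

lemma sq_rpow_div_two (c p : ℝ) : (c ^ 2) ^ (p / 2) = |c| ^ p := by
  rw [rpow_div_two_eq_sqrt p (sq_nonneg c), sqrt_sq_eq_abs]

end Real

open Real

private lemma half_smul_add_sq_add_half_smul_sub_sq (a b : ℝ) :
    (1 / 2 : ℝ) • (a + b) ^ 2 + (1 / 2 : ℝ) • (a - b) ^ 2 = a ^ 2 + b ^ 2 := by
  simp only [smul_eq_mul]; ring

lemma two_mul_abs_rpow_add_abs_rpow_lt {p a b : ℝ} (hp : 2 < p) (ha : a ≠ 0) (hb : b ≠ 0) :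
    2 * (|a| ^ p + |b| ^ p) < |a + b| ^ p + |a - b| ^ p := by
  have hq : 1 < p / 2 := by linarith
  have hconv := (strictConvexOn_rpow hq).convexOn.2 (sq_nonneg (a + b)) (sq_nonneg (a - b))
    (by norm_num : (0 : ℝ) ≤ 1 / 2) (by norm_num : (0 : ℝ) ≤ 1 / 2) (by norm_num)
  rw [half_smul_add_sq_add_half_smul_sub_sq, smul_eq_mul, smul_eq_mul] at hconv
  simp only [← sq_rpow_div_two]
  calc 2 * ((a ^ 2) ^ (p / 2) + (b ^ 2) ^ (p / 2))
      < 2 * (a ^ 2 + b ^ 2) ^ (p / 2) := by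
        gcongr; exact add_rpow_lt_rpow_add hq (by positivity) (by positivity)
    _ ≤ ((a + b) ^ 2) ^ (p / 2) + ((a - b) ^ 2) ^ (p / 2) := by linarith

lemma abs_add_rpow_add_abs_sub_rpow_lt {p a b : ℝ} (hp₀ : 0 < p) (hp : p < 2) (ha : a ≠ 0)
    (hb : b ≠ 0) : |a + b| ^ p + |a - b| ^ p < 2 * (|a| ^ p + |b| ^ p) := by
  have hq₀ : 0 < p / 2 := by linarith
  have hq₁ : p / 2 < 1 := by linarith
  have hconc := (strictConcaveOn_rpow hq₀ hq₁).concaveOn.2 (sq_nonneg (a + b))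
    (sq_nonneg (a - b)) (by norm_num : (0 : ℝ) ≤ 1 / 2) (by norm_num : (0 : ℝ) ≤ 1 / 2)
    (by norm_num)
  rw [half_smul_add_sq_add_half_smul_sub_sq, smul_eq_mul, smul_eq_mul] at hconc
  simp only [← sq_rpow_div_two]
  calc ((a + b) ^ 2) ^ (p / 2) + ((a - b) ^ 2) ^ (p / 2)
      ≤ 2 * (a ^ 2 + b ^ 2) ^ (p / 2) := by linarith
    _ < 2 * ((a ^ 2) ^ (p / 2) + (b ^ 2) ^ (p / 2)) := by
        gcongr; exact rpow_add_lt_add_rpow hq₁ (by positivity) (by positivity)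

/-- Equality case in the scalar Clarkson inequalities: for real `p > 1`, `p ≠ 2`,
`|a+b|^p + |a-b|^p = 2(|a|^p + |b|^p)` iff `a = 0` or `b = 0`. -/
theorem clarkson_scalar_eq (p a b : ℝ) (hp1 : 1 < p) (hp2 : p ≠ 2) :
    |a + b| ^ p + |a - b| ^ p = 2 * (|a| ^ p + |b| ^ p) ↔ a = 0 ∨ b = 0 := by
  constructor
  · intro heq
    by_contra! hab
    rcases hp2.lt_or_gt with hp | hp
    · exact (abs_add_rpow_add_abs_sub_rpow_lt (by linarith) hp hab.1 hab.2).ne heq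
    · exact (two_mul_abs_rpow_add_abs_rpow_lt hp hab.1 hab.2).ne' heq
  · rintro (rfl | rfl) <;> simp [zero_rpow (by linarith : p ≠ 0), two_mul]
end

section
/- Fix an integer p ≥ 2. For every interval I ⊆ ℝ/ℤ, every sign σ ∈ {-1, 1}, and every real R ≥ 1, the Lebesgue measure of the set {t ∈ [-R/2, R/2] : σ·t^p mod 1 ∈ I} equals |I|·R + O_p(1), where the implied constant depends only on p (uniformly in I, σ, and R). -/
open MeasureTheory Set

/-!
On `t ≥ 0` the condition `t ^ p ∈ [c, c + len) + ℤ` cuts out the intervals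
`[(c + n) ^ (1/p), (c + n + len) ^ (1/p))`. As `y ↦ y ^ (1/p)` is concave, the `n`-th interval has
length between `len` times the unit increments of `y ^ (1/p)` just after and just before it, so the
total length telescopes to `len * T + O(1)`; subadditivity of `y ^ (1/p)` controls the two ends.
The half-line `t ≤ 0` is the case of the sign `σ * (-1) ^ p`. Endpoints of the intervals carry no
mass, so it suffices to bound the version with open intervals from below and the one with closed
intervals from above; shifting `c` by an integer changes neither.
-/

theorem AddCircle.coe_mem_image_coe_iff {𝕜 : Type*} [AddCommGroup 𝕜] {a y : 𝕜} {s : Set 𝕜} :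
    (y : AddCircle a) ∈ ((↑) : 𝕜 → AddCircle a) '' s ↔ ∃ m : ℤ, y + m • a ∈ s := by
  constructor
  · rintro ⟨x, hx, hxy⟩
    have hxy' : ((x - y : 𝕜) : AddCircle a) = 0 := by rw [coe_sub, hxy, sub_self]
    obtain ⟨m, hm⟩ := (coe_eq_zero_iff a).1 hxy'
    exact ⟨m, by rwa [hm, add_sub_cancel]⟩
  · rintro ⟨m, hm⟩
    exact ⟨_, hm, by rw [coe_add, coe_zsmul, coe_period, smul_zero, add_zero]⟩

theorem ConcaveOn.sub_mul_sub_le_sub_mul_sub {𝕜 : Type*} [Field 𝕜] [LinearOrder 𝕜]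
    [IsStrictOrderedRing 𝕜] {s : Set 𝕜} {f : 𝕜 → 𝕜} (hf : ConcaveOn 𝕜 s f) {a b x y : 𝕜}
    (ha : a ∈ s) (hy : y ∈ s) (hab : a ≤ b) (hbx : b ≤ x) (hxy : x ≤ y) :
    (f y - f x) * (b - a) ≤ (f b - f a) * (y - x) := by
  rcases hab.eq_or_lt with rfl | hab
  · simp
  rcases hxy.eq_or_lt with rfl | hxy
  · simp
  have hs : ∀ z, a ≤ z → z ≤ y → z ∈ s :=
    fun z h₁ h₂ => hf.1.ordConnected.out ha hy ⟨h₁, h₂⟩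
  have key : (f y - f x) / (y - x) ≤ (f b - f a) / (b - a) := by
    rcases hbx.eq_or_lt with rfl | hbx
    · exact hf.slope_anti_adjacent ha hy hab hxy
    · calc (f y - f x) / (y - x) ≤ (f x - f b) / (x - b) :=
            hf.slope_anti_adjacent (hs b hab.le (by linarith)) hy hbx hxy
      _ ≤ (f b - f a) / (b - a) :=
            hf.slope_anti_adjacent ha (hs x (by linarith) hxy.le) hab hbx
  rwa [div_le_div_iff₀ (by linarith) (by linarith)] at key

theorem ConcaveOn.sum_sub_le_mul_sub {f : ℝ → ℝ} (hf : ConcaveOn ℝ (Ici 0) f) {c len : ℝ}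
    (hc : 0 ≤ c) (hl₀ : 0 ≤ len) (N : ℕ) :
    ∑ k ∈ Finset.range N, (f (c + k + 1 + len) - f (c + k + 1)) ≤ len * (f (c + N) - f c) := by
  calc ∑ k ∈ Finset.range N, (f (c + k + 1 + len) - f (c + k + 1))
      ≤ ∑ k ∈ Finset.range N, len * (f (c + (k + 1 : ℕ)) - f (c + k)) := by
        refine Finset.sum_le_sum fun k _ => ?_
        have := hf.sub_mul_sub_le_sub_mul_sub (a := c + k) (b := c + k + 1) (x := c + k + 1)
          (y := c + k + 1 + len) (by simp only [mem_Ici]; positivity)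
          (by simp only [mem_Ici]; positivity) (by linarith) le_rfl (by linarith)
        push_cast
        ring_nf at this ⊢
        linarith
    _ = len * (f (c + N) - f c) := by
        rw [← Finset.mul_sum, Finset.sum_range_sub (fun k : ℕ => f (c + k))]
        simp

theorem ConcaveOn.mul_sub_le_sum_sub {f : ℝ → ℝ} (hf : ConcaveOn ℝ (Ici 0) f) {c len : ℝ}
    (hc : 0 ≤ c) (hl₀ : 0 ≤ len) (hl₁ : len ≤ 1) (M : ℕ) :
    len * (f (c + M + 1) - f (c + 1)) ≤ ∑ k ∈ Finset.range M, (f (c + k + len) - f (c + k)) := by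
  calc len * (f (c + M + 1) - f (c + 1))
      = ∑ k ∈ Finset.range M, len * (f (c + (k + 1 : ℕ) + 1) - f (c + k + 1)) := by
        rw [← Finset.mul_sum, Finset.sum_range_sub (fun k : ℕ => f (c + k + 1))]
        simp
    _ ≤ ∑ k ∈ Finset.range M, (f (c + k + len) - f (c + k)) := by
        refine Finset.sum_le_sum fun k _ => ?_
        have := hf.sub_mul_sub_le_sub_mul_sub (a := c + k) (b := c + k + len) (x := c + k + 1)
          (y := c + k + 1 + 1) (by simp only [mem_Ici]; positivity)
          (by simp only [mem_Ici]; positivity) (by linarith) (by linarith) (by linarith)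
        push_cast
        ring_nf at this ⊢
        linarith

section PowHits

variable {p : ℕ} {c len T : ℝ}

def powHitsIcc (p : ℕ) (c len T : ℝ) : Set ℝ :=
  {t | t ∈ Icc 0 T ∧ ∃ n : ℤ, t ^ p ∈ Icc (c + n) (c + n + len)}

def powHitsIoo (p : ℕ) (c len T : ℝ) : Set ℝ :=
  {t | t ∈ Icc 0 T ∧ ∃ n : ℤ, t ^ p ∈ Ioo (c + n) (c + n + len)}

theorem powHitsIoo_subset_powHitsIcc : powHitsIoo p c len T ⊆ powHitsIcc p c len T :=
  fun _ ⟨ht, n, hn⟩ => ⟨ht, n, Ioo_subset_Icc_self hn⟩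

theorem volume_powHitsIcc_ne_top : volume (powHitsIcc p c len T) ≠ ⊤ :=
  ((measure_mono fun _ h => h.1).trans_lt measure_Icc_lt_top).ne

theorem powHitsIcc_add_intCast (k : ℤ) :
    powHitsIcc p (c + k) len T = powHitsIcc p c len T := by
  ext t
  refine and_congr_right fun _ => ⟨fun ⟨n, hn⟩ => ⟨k + n, ?_⟩, fun ⟨n, hn⟩ => ⟨n - k, ?_⟩⟩ <;>
    push_cast <;> convert hn using 2 <;> ring

theorem powHitsIoo_add_intCast (k : ℤ) :
    powHitsIoo p (c + k) len T = powHitsIoo p c len T := by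
  ext t
  refine and_congr_right fun _ => ⟨fun ⟨n, hn⟩ => ⟨k + n, ?_⟩, fun ⟨n, hn⟩ => ⟨n - k, ?_⟩⟩ <;>
    push_cast <;> convert hn using 2 <;> ring

end PowHits

section RpowInv

variable {p : ℕ} {a b t : ℝ}

theorem mem_Icc_rpow_inv_natCast_of_pow_mem (hp : p ≠ 0) (ht : 0 ≤ t) (ha : 0 ≤ a)
    (h : t ^ p ∈ Icc a b) : t ∈ Icc (a ^ (p⁻¹ : ℝ)) (b ^ (p⁻¹ : ℝ)) := by
  have hp' : (0 : ℝ) < p := by positivity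
  rw [← Real.rpow_natCast] at h
  exact ⟨(Real.rpow_inv_le_iff_of_pos ha ht hp').2 h.1,
    (Real.le_rpow_inv_iff_of_pos ht (ha.trans (h.1.trans h.2)) hp').2 h.2⟩

theorem pow_mem_Ioo_of_mem_Ioo_rpow_inv_natCast (hp : p ≠ 0) (ha : 0 ≤ a) (hb : 0 ≤ b)
    (h : t ∈ Ioo (a ^ (p⁻¹ : ℝ)) (b ^ (p⁻¹ : ℝ))) : t ^ p ∈ Ioo a b := by
  have hp' : (0 : ℝ) < p := by positivity
  have ht : 0 ≤ t := (Real.rpow_nonneg ha _).trans h.1.le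
  rw [← Real.rpow_natCast]
  exact ⟨(Real.rpow_inv_lt_iff_of_pos ha ht hp').1 h.1,
    (Real.lt_rpow_inv_iff_of_pos ht hb hp').1 h.2⟩

end RpowInv

section Bounds

variable {p : ℕ} {c len T : ℝ}

theorem volume_real_powHitsIcc_le (hp : p ≠ 0) (hc₀ : 0 ≤ c) (hc₁ : c ≤ 1) (hl₀ : 0 ≤ len)
    (hl₁ : len ≤ 1) (hT : 0 ≤ T) : volume.real (powHitsIcc p c len T) ≤ len * T + 4 := by
  set q : ℝ := (p : ℝ)⁻¹
  have hq₀ : 0 ≤ q := by positivity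
  have hq₁ : q ≤ 1 := Nat.cast_inv_le_one p
  set N := ⌈T ^ p⌉₊
  have hcover : powHitsIcc p c len T ⊆
      Icc 0 (2 ^ q) ∪ ⋃ k ∈ Finset.range N, Icc ((c + k + 1) ^ q) ((c + k + 1 + len) ^ q) := by
    rintro t ⟨ht, n, hn⟩
    rcases le_or_gt n 0 with hn₀ | hn₀
    · have : (n : ℝ) ≤ 0 := by exact_mod_cast hn₀
      exact Or.inl ⟨ht.1, (mem_Icc_rpow_inv_natCast_of_pow_mem hp ht.1 le_rfl
        ⟨pow_nonneg ht.1 p, by linarith [hn.2]⟩).2⟩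
    · obtain ⟨k, rfl⟩ : ∃ k : ℕ, n = k + 1 := ⟨(n - 1).toNat, by omega⟩
      push_cast at hn
      have hkN : (k : ℝ) + 1 ≤ N := by
        linarith [hn.1, pow_le_pow_left₀ ht.1 ht.2 p, Nat.le_ceil (T ^ p)]
      refine Or.inr (mem_biUnion (Finset.mem_range.2 (by exact_mod_cast hkN)) ?_)
      rw [← add_assoc] at hn
      exact mem_Icc_rpow_inv_natCast_of_pow_mem hp ht.1 (by positivity) hn
  have hcN : (c + N) ^ q ≤ T + 2 :=
    calc (c + N) ^ q ≤ (T ^ p + 2) ^ q := by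
          have := Nat.ceil_lt_add_one (by positivity : 0 ≤ T ^ p)
          exact Real.rpow_le_rpow (by positivity) (by linarith) hq₀
    _ ≤ (T ^ p) ^ q + 2 ^ q := Real.rpow_add_le_add_rpow (by positivity) zero_le_two hq₀ hq₁
    _ ≤ T + 2 := by
        rw [Real.pow_rpow_inv_natCast hT hp]
        linarith [Real.rpow_le_self_of_one_le one_le_two hq₁]
  calc volume.real (powHitsIcc p c len T)
      ≤ volume.real (Icc 0 (2 ^ q) ∪
          ⋃ k ∈ Finset.range N, Icc ((c + k + 1) ^ q) ((c + k + 1 + len) ^ q)) :=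
        measureReal_mono hcover (measure_union_lt_top measure_Icc_lt_top
          (measure_biUnion_lt_top (Finset.finite_toSet _) fun _ _ => measure_Icc_lt_top)).ne
    _ ≤ volume.real (Icc (0 : ℝ) (2 ^ q)) +
          ∑ k ∈ Finset.range N, volume.real (Icc ((c + k + 1) ^ q) ((c + k + 1 + len) ^ q)) :=
        (measureReal_union_le _ _).trans (add_le_add le_rfl (measureReal_biUnion_finset_le _ _))
    _ = 2 ^ q + ∑ k ∈ Finset.range N, ((c + k + 1 + len) ^ q - (c + k + 1) ^ q) := by
        rw [Real.volume_real_Icc_of_le (by positivity), sub_zero]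
        exact congrArg _ (Finset.sum_congr rfl fun k _ =>
          Real.volume_real_Icc_of_le (Real.rpow_le_rpow (by positivity) (by linarith) hq₀))
    _ ≤ 2 + len * ((c + N) ^ q - c ^ q) :=
        add_le_add (Real.rpow_le_self_of_one_le one_le_two hq₁)
          ((Real.concaveOn_rpow hq₀ hq₁).sum_sub_le_mul_sub hc₀ hl₀ N)
    _ ≤ len * T + 4 := by
        nlinarith [mul_le_mul_of_nonneg_left hcN hl₀, Real.rpow_nonneg hc₀ q]

theorem le_volume_real_powHitsIoo (hp : p ≠ 0) (hc₀ : 0 ≤ c) (hc₁ : c ≤ 1) (hl₀ : 0 ≤ len)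
    (hl₁ : len ≤ 1) (hT : 0 ≤ T) : len * T - 3 ≤ volume.real (powHitsIoo p c len T) := by
  set q : ℝ := (p : ℝ)⁻¹
  have hq₀ : 0 ≤ q := by positivity
  have hq₁ : q ≤ 1 := Nat.cast_inv_le_one p
  set M := ⌊T ^ p - 1⌋₊
  have hmono : Monotone fun k : ℕ => (c + k) ^ q :=
    fun i j hij => Real.rpow_le_rpow (by positivity) (by gcongr) hq₀
  have hdisj : PairwiseDisjoint ↑(Finset.range M)
      fun k : ℕ => Ioo ((c + k) ^ q) ((c + k + len) ^ q) := by
    refine fun i _ j _ hij => (hmono.pairwise_disjoint_on_Ioc_succ hij).mono ?_ ?_ <;>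
      exact Ioo_subset_Ioc_self.trans (Ioc_subset_Ioc_right (Real.rpow_le_rpow (by positivity)
        (by push_cast [Order.succ_eq_add_one]; linarith) hq₀))
  have hsub : ⋃ k ∈ Finset.range M, Ioo ((c + k) ^ q) ((c + k + len) ^ q) ⊆
      powHitsIoo p c len T := by
    simp only [iUnion_subset_iff]
    intro k hk t ht
    have htp := pow_mem_Ioo_of_mem_Ioo_rpow_inv_natCast hp (by positivity) (by positivity) ht
    have ht₀ : 0 ≤ t := (Real.rpow_nonneg (by positivity) _).trans ht.1.le
    have hkM : ((k + 1 : ℕ) : ℝ) ≤ T ^ p - 1 :=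
      (Nat.le_floor_iff' k.succ_ne_zero).1 (Finset.mem_range.1 hk)
    push_cast at hkM
    have htT : t ≤ T := (pow_le_pow_iff_left₀ ht₀ hT hp).1 (by linarith [htp.2])
    exact ⟨⟨ht₀, htT⟩, k, by exact_mod_cast htp⟩
  have hTM : T ≤ (c + M + 1) ^ q + 1 :=
    calc T = (T ^ p) ^ q := (Real.pow_rpow_inv_natCast hT hp).symm
    _ ≤ (c + M + 1 + 1) ^ q :=
        Real.rpow_le_rpow (by positivity) (by linarith [Nat.lt_floor_add_one (T ^ p - 1)]) hq₀
    _ ≤ (c + M + 1) ^ q + 1 ^ q :=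
        Real.rpow_add_le_add_rpow (by positivity) zero_le_one hq₀ hq₁
    _ = (c + M + 1) ^ q + 1 := by rw [Real.one_rpow]
  have hc : (c + 1) ^ q ≤ 2 :=
    (Real.rpow_le_rpow (by positivity) (by linarith) hq₀).trans
      (Real.rpow_le_self_of_one_le one_le_two hq₁)
  calc len * T - 3 ≤ len * ((c + M + 1) ^ q - (c + 1) ^ q) := by
        nlinarith [mul_le_mul_of_nonneg_left hTM hl₀, mul_le_mul_of_nonneg_left hc hl₀]
    _ ≤ ∑ k ∈ Finset.range M, ((c + k + len) ^ q - (c + k) ^ q) :=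
        (Real.concaveOn_rpow hq₀ hq₁).mul_sub_le_sum_sub hc₀ hl₀ hl₁ M
    _ = ∑ k ∈ Finset.range M, volume.real (Ioo ((c + k) ^ q) ((c + k + len) ^ q)) :=
        Finset.sum_congr rfl fun k _ =>
          (Real.volume_real_Ioo_of_le (Real.rpow_le_rpow (by positivity) (by linarith) hq₀)).symm
    _ = volume.real (⋃ k ∈ Finset.range M, Ioo ((c + k) ^ q) ((c + k + len) ^ q)) :=
        (measureReal_biUnion_finset hdisj (fun _ _ => measurableSet_Ioo)
          fun _ _ => measure_Ioo_lt_top.ne).symm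
    _ ≤ volume.real (powHitsIoo p c len T) :=
        measureReal_mono hsub (ne_top_of_le_ne_top volume_powHitsIcc_ne_top
          (measure_mono powHitsIoo_subset_powHitsIcc))

end Bounds

theorem abs_volume_real_sub_le_of_powHitsIoo_subset_of_subset_powHitsIcc {p : ℕ} {c len T : ℝ}
    (hp : p ≠ 0) (hl₀ : 0 ≤ len) (hl₁ : len ≤ 1) (hT : 0 ≤ T) {S : Set ℝ}
    (h₁ : powHitsIoo p c len T ⊆ S) (h₂ : S ⊆ powHitsIcc p c len T) :
    |volume.real S - len * T| ≤ 4 := by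
  rw [← Int.fract_add_floor c, powHitsIoo_add_intCast] at h₁
  rw [← Int.fract_add_floor c, powHitsIcc_add_intCast] at h₂
  have hc₀ := Int.fract_nonneg c
  have hc₁ := (Int.fract_lt_one c).le
  have hS : volume S ≠ ⊤ := ne_top_of_le_ne_top volume_powHitsIcc_ne_top (measure_mono h₂)
  rw [abs_le]
  constructor
  · linarith [le_volume_real_powHitsIoo hp hc₀ hc₁ hl₀ hl₁ hT, measureReal_mono h₁ hS]
  · linarith [volume_real_powHitsIcc_le hp hc₀ hc₁ hl₀ hl₁ hT,
      measureReal_mono h₂ volume_powHitsIcc_ne_top]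

theorem abs_volume_real_sign_mul_pow_mem_sub_le {p : ℕ} {c len σ T : ℝ} (hp : p ≠ 0)
    (hl₀ : 0 ≤ len) (hl₁ : len ≤ 1) (hσ : σ = -1 ∨ σ = 1) (hT : 0 ≤ T) :
    |volume.real {t : ℝ | t ∈ Icc 0 T ∧
        ((σ * t ^ p : ℝ) : AddCircle (1 : ℝ)) ∈
          ((↑) : ℝ → AddCircle (1 : ℝ)) '' Ico c (c + len)}
      - len * T| ≤ 4 := by
  simp only [AddCircle.coe_mem_image_coe_iff, zsmul_eq_mul, mul_one, mem_Ico]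
  rcases hσ with rfl | rfl
  · refine abs_volume_real_sub_le_of_powHitsIoo_subset_of_subset_powHitsIcc (c := -(c + len))
      hp hl₀ hl₁ hT ?_ ?_
    · rintro t ⟨ht, n, hn⟩
      exact ⟨ht, n, by linarith [hn.1, hn.2], by linarith [hn.1, hn.2]⟩
    · rintro t ⟨ht, m, hm⟩
      exact ⟨ht, m, by linarith [hm.1, hm.2], by linarith [hm.1, hm.2]⟩
  · refine abs_volume_real_sub_le_of_powHitsIoo_subset_of_subset_powHitsIcc (c := c)
      hp hl₀ hl₁ hT ?_ ?_
    · rintro t ⟨ht, n, hn⟩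
      exact ⟨ht, -n, by push_cast; linarith [hn.1], by push_cast; linarith [hn.2]⟩
    · rintro t ⟨ht, m, hm⟩
      exact ⟨ht, -m, by push_cast; linarith [hm.1], by push_cast; linarith [hm.2]⟩

theorem measureReal_eq_inter_Ici_add_neg_inter_Ici (μ : Measure ℝ) [μ.IsNegInvariant]
    [NullSingletonClass μ] {A : Set ℝ} (hA : μ A ≠ ⊤) :
    μ.real A = μ.real (A ∩ Ici 0) + μ.real (-A ∩ Ici 0) := by
  rw [← measureReal_inter_add_sdiff measurableSet_Ici hA, sdiff_eq, compl_Ici,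
    measureReal_congr ((ae_eq_refl A).inter Iio_ae_eq_Iic)]
  congr 1
  rw [measureReal_def, measureReal_def, ← Measure.measure_neg μ (A ∩ Iic 0), inter_neg, neg_Iic,
    neg_zero]

theorem volume_real_sep_Icc_neg_eq_add (P : ℝ → Prop) (T : ℝ) :
    volume.real {t | t ∈ Icc (-T) T ∧ P t} =
      volume.real {t | t ∈ Icc 0 T ∧ P t} + volume.real {t | t ∈ Icc 0 T ∧ P (-t)} := by
  rw [measureReal_eq_inter_Ici_add_neg_inter_Ici volume
    (ne_top_of_le_ne_top measure_Icc_lt_top.ne (measure_mono fun _ h => h.1))]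
  congr 2 <;> ext t <;> simp only [mem_inter_iff, mem_ofPred_eq, mem_neg, mem_Icc, mem_Ici]
  all_goals exact ⟨fun ⟨⟨⟨_, h₁⟩, h₂⟩, h₃⟩ => ⟨⟨h₃, by linarith⟩, h₂⟩,
    fun ⟨⟨h₁, h₂⟩, h₃⟩ => ⟨⟨⟨by linarith, by linarith⟩, h₃⟩, h₁⟩⟩

/-- One-variable density lemma: for an integer `p ≥ 2`, uniformly over torus intervals `I`
(of length `len`, parametrized as projections of `Set.Ico c (c + len)`), signs `σ ∈ {-1,1}`,
and `R ≥ 1`, the measure of `{t ∈ [-R/2, R/2] : σ t^p mod 1 ∈ I}` is `len·R + O_p(1)`. -/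
theorem one_variable_density (p : ℕ) (hp : 2 ≤ p) :
    ∃ C : ℝ, ∀ c len : ℝ, 0 ≤ len → len ≤ 1 → ∀ σ : ℝ, σ = -1 ∨ σ = 1 →
      ∀ R : ℝ, 1 ≤ R →
      |(volume {t : ℝ | t ∈ Set.Icc (-R / 2) (R / 2) ∧
          ((σ * t ^ p : ℝ) : AddCircle (1 : ℝ)) ∈
            (fun u : ℝ => (u : AddCircle (1 : ℝ))) '' Set.Ico c (c + len)}).toReal
        - len * R| ≤ C := by
  refine ⟨8, fun c len hl₀ hl₁ σ hσ R hR => ?_⟩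
  have hp₀ : p ≠ 0 := by omega
  have hR : 0 ≤ R / 2 := by linarith
  have hσ' : σ * (-1) ^ p = -1 ∨ σ * (-1) ^ p = 1 := by
    rcases neg_one_pow_eq_or ℝ p with h | h <;> rw [h] <;> rcases hσ with rfl | rfl <;> norm_num
  have hpos := abs_volume_real_sign_mul_pow_mem_sub_le (c := c) hp₀ hl₀ hl₁ hσ hR
  have hneg := abs_volume_real_sign_mul_pow_mem_sub_le (c := c) hp₀ hl₀ hl₁ hσ' hR
  simp only [mul_assoc, ← neg_pow] at hneg
  rw [← measureReal_def, neg_div, volume_real_sep_Icc_neg_eq_add]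
  rw [abs_le] at hpos hneg ⊢
  constructor <;> linarith
end

section
/- Let p ≥ 2 be an integer, let a ∈ (0,1), and let m ≥ 1 be an integer. Then a·((m+1)^{1/p} - m^{1/p}) ≤ (m+a)^{1/p} - m^{1/p} ≤ a·((m+1)^{1/p} - m^{1/p}) + C_p·m^{-2+1/p} for a constant C_p depending only on p. -/
/-!
With `f t = t ^ α`, `α = 1 / p ∈ [0, 1]`, the lower bound is concavity of `f` on `[m, m + 1]`.
For the upper bound, the tangent lines of the concave `f` give `f (m + a) - f m ≤ a f' m` and
`f (m + 1) - f m ≥ f' (m + 1)`, so the error is at most `a (f' m - f' (m + 1))`; as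
`f' = α t ^ (α - 1)` is convex, this is at most `-a f'' m = a α (1 - α) m ^ (α - 2)`,
and `C_p = α (1 - α)` works.
-/

open Set

namespace Real

theorem convexOn_rpow_of_nonpos {β : ℝ} (hβ : β ≤ 0) :
    ConvexOn ℝ (Ioi 0) fun x : ℝ ↦ x ^ β := by
  refine convexOn_of_hasDerivWithinAt2_nonneg (convex_Ioi 0) (f' := fun x ↦ β * x ^ (β - 1))
    (f'' := fun x ↦ β * ((β - 1) * x ^ (β - 1 - 1)))
    (fun x hx ↦ (continuousAt_rpow_const x β (Or.inl (ne_of_gt hx))).continuousWithinAt)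
    ?_ ?_ ?_ <;> rw [interior_Ioi]
  · exact fun x hx ↦ (hasDerivAt_rpow_const (Or.inl (ne_of_gt hx))).hasDerivWithinAt
  · exact fun x hx ↦ ((hasDerivAt_rpow_const (Or.inl (ne_of_gt hx))).const_mul β).hasDerivWithinAt
  · intro x hx
    rw [← mul_assoc]
    exact mul_nonneg (mul_nonneg_of_nonpos_of_nonpos hβ (by linarith)) (rpow_nonneg (le_of_lt hx) _)

variable {α x y : ℝ}

theorem rpow_sub_rpow_le_mul_rpow_of_le_one (hα₀ : 0 ≤ α) (hα₁ : α ≤ 1) (hx : 0 < x) (hxy : x < y) :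
    y ^ α - x ^ α ≤ α * x ^ (α - 1) * (y - x) := by
  have := (concaveOn_rpow hα₀ hα₁).slope_le_of_hasDerivAt (le_of_lt hx) (hx.trans hxy).le hxy
    (hasDerivAt_rpow_const (Or.inl (ne_of_gt hx)))
  rwa [slope_def_field, div_le_iff₀ (sub_pos.2 hxy)] at this

theorem mul_rpow_le_rpow_sub_rpow_of_le_one (hα₀ : 0 ≤ α) (hα₁ : α ≤ 1) (hx : 0 < x)
    (hxy : x < y) : α * y ^ (α - 1) * (y - x) ≤ y ^ α - x ^ α := by
  have := (concaveOn_rpow hα₀ hα₁).le_slope_of_hasDerivAt (le_of_lt hx) (hx.trans hxy).le hxy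
    (hasDerivAt_rpow_const (Or.inl (ne_of_gt (hx.trans hxy))))
  rwa [slope_def_field, le_div_iff₀ (sub_pos.2 hxy)] at this

theorem mul_rpow_le_rpow_sub_rpow_of_nonpos (hα : α ≤ 0) (hx : 0 < x) (hxy : x < y) :
    α * x ^ (α - 1) * (y - x) ≤ y ^ α - x ^ α := by
  have := (convexOn_rpow_of_nonpos hα).le_slope_of_hasDerivAt hx (hx.trans hxy) hxy
    (hasDerivAt_rpow_const (Or.inl (ne_of_gt hx)))
  rwa [slope_def_field, le_div_iff₀ (sub_pos.2 hxy)] at this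

theorem mul_add_one_rpow_sub_rpow_le_add_rpow_sub_rpow {a : ℝ} (hα₀ : 0 ≤ α) (hα₁ : α ≤ 1)
    (hx : 0 ≤ x) (ha₀ : 0 ≤ a) (ha₁ : a ≤ 1) :
    a * ((x + 1) ^ α - x ^ α) ≤ (x + a) ^ α - x ^ α := by
  have := (concaveOn_rpow hα₀ hα₁).2 (x := x) (y := x + 1) hx (add_nonneg hx zero_le_one)
    (sub_nonneg.2 ha₁) ha₀ (by ring)
  simp only [smul_eq_mul] at this
  rw [show (1 - a) * x + a * (x + 1) = x + a by ring] at this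
  linarith

theorem add_rpow_sub_rpow_sub_mul_le {a : ℝ} (hα₀ : 0 ≤ α) (hα₁ : α ≤ 1) (hx : 0 < x)
    (ha : 0 < a) :
    (x + a) ^ α - x ^ α - a * ((x + 1) ^ α - x ^ α) ≤ a * α * (1 - α) * x ^ (α - 2) := by
  have h₁ := rpow_sub_rpow_le_mul_rpow_of_le_one hα₀ hα₁ hx (lt_add_of_pos_right x ha)
  have h₂ := mul_rpow_le_rpow_sub_rpow_of_le_one hα₀ hα₁ hx (lt_add_one x)
  have h₃ := mul_rpow_le_rpow_sub_rpow_of_nonpos (sub_nonpos.2 hα₁) hx (lt_add_one x)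
  rw [sub_sub, one_add_one_eq_two] at h₃
  simp only [add_sub_cancel_left, mul_one] at h₁ h₂ h₃
  linarith [mul_le_mul_of_nonneg_left h₂ ha.le, mul_le_mul_of_nonneg_left h₃ (mul_nonneg ha.le hα₀)]

end Real

theorem root_increment_estimate_general (p : ℕ) :
    ∃ C : ℝ, ∀ a : ℝ, 0 < a → a < 1 → ∀ m : ℕ, 1 ≤ m →
      a * (((m : ℝ) + 1) ^ (1 / (p : ℝ)) - (m : ℝ) ^ (1 / (p : ℝ)))
          ≤ ((m : ℝ) + a) ^ (1 / (p : ℝ)) - (m : ℝ) ^ (1 / (p : ℝ)) ∧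
      ((m : ℝ) + a) ^ (1 / (p : ℝ)) - (m : ℝ) ^ (1 / (p : ℝ))
          ≤ a * (((m : ℝ) + 1) ^ (1 / (p : ℝ)) - (m : ℝ) ^ (1 / (p : ℝ)))
            + C * (m : ℝ) ^ (-2 + 1 / (p : ℝ)) := by
  have hα₀ : 0 ≤ 1 / (p : ℝ) := by positivity
  have hα₁ : 1 / (p : ℝ) ≤ 1 := by simpa only [one_div] using Nat.cast_inv_le_one p
  set α : ℝ := 1 / (p : ℝ)
  refine ⟨α * (1 - α), fun a ha₀ ha₁ m hm => ⟨?_, ?_⟩⟩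
  · exact Real.mul_add_one_rpow_sub_rpow_le_add_rpow_sub_rpow hα₀ hα₁ m.cast_nonneg ha₀.le ha₁.le
  · have hm : (0 : ℝ) < m := by exact_mod_cast hm
    have hC : 0 ≤ α * (1 - α) * (m : ℝ) ^ (α - 2) :=
      mul_nonneg (mul_nonneg hα₀ (sub_nonneg.2 hα₁)) (Real.rpow_nonneg hm.le _)
    have herr := Real.add_rpow_sub_rpow_sub_mul_le hα₀ hα₁ hm ha₀
    rw [neg_add_eq_sub]
    linarith [mul_le_mul_of_nonneg_right ha₁.le hC]

/-- Key estimate for `p`-th roots: for an integer `p ≥ 2`, `a ∈ (0,1)` and `m ≥ 1`,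
`a((m+1)^{1/p} - m^{1/p}) ≤ (m+a)^{1/p} - m^{1/p} ≤ a((m+1)^{1/p} - m^{1/p}) + C_p m^{-2+1/p}`. -/
theorem root_increment_estimate (p : ℕ) (hp : 2 ≤ p) :
    ∃ C : ℝ, ∀ a : ℝ, 0 < a → a < 1 → ∀ m : ℕ, 1 ≤ m →
      a * (((m : ℝ) + 1) ^ (1 / (p : ℝ)) - (m : ℝ) ^ (1 / (p : ℝ)))
          ≤ ((m : ℝ) + a) ^ (1 / (p : ℝ)) - (m : ℝ) ^ (1 / (p : ℝ)) ∧
      ((m : ℝ) + a) ^ (1 / (p : ℝ)) - (m : ℝ) ^ (1 / (p : ℝ))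
          ≤ a * (((m : ℝ) + 1) ^ (1 / (p : ℝ)) - (m : ℝ) ^ (1 / (p : ℝ)))
            + C * (m : ℝ) ^ (-2 + 1 / (p : ℝ)) :=
  root_increment_estimate_general p
end

section
/- Let n ≥ 4, set m = ⌊n^{1/2}⌋, A = 1/m^2, and P = {0, 1, …, m^2 - 1}. Then for every B ∈ ℝ, the set {(A·k^2 + B·k) mod 1 : k ∈ P} ⊆ ℝ/ℤ intersects every interval on ℝ/ℤ of length 5/m. -/
/-!
Put `m = ⌊√n⌋` and `f k = k² / m² + B k`. The increments `f (k + 1) - f k = B + (2k + 1) / m²`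
increase by `2 / m²` per step, so modulo `1` they run through all of `[0, 1)` with mesh `< 1 / m`,
and some `k₀` has increment `≡ s ∈ (1 / m, 2 / m)`. Starting at `k₀`, the next `m` increments are
then `≡ s + 2j / m² ∈ (1 / m, 4 / m)`: lifted to `ℝ`, the walk advances by more than `1` in total
with steps shorter than `5 / m`, so it cannot jump over an interval of length `5 / m` on the circle.
-/

open Set

theorem exists_mem_Ioo_of_step_lt {g : ℕ → ℝ} {δ v : ℝ} {M : ℕ}
    (hstep : ∀ j < M, g (j + 1) < g j + δ) (h0 : g 0 ≤ v) (hM : v < g M) :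
    ∃ j ≤ M, g j ∈ Ioo v (v + δ) := by
  induction M with
  | zero => exact absurd (h0.trans_lt hM) (lt_irrefl _)
  | succ M ih =>
    by_cases hv : v < g M
    · obtain ⟨j, hj, hmem⟩ := ih (fun j hj => hstep j (by omega)) hv
      exact ⟨j, by omega, hmem⟩
    · exact ⟨M + 1, le_rfl, hM, by linarith [hstep M (by omega)]⟩

theorem exists_add_int_mem_Ioo_of_step_lt {g : ℕ → ℝ} {δ : ℝ} {M : ℕ}
    (hstep : ∀ j < M, g (j + 1) < g j + δ) (hM : g 0 + 1 ≤ g M) (c : ℝ) :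
    ∃ j ≤ M, ∃ z : ℤ, g j + z ∈ Ioo c (c + δ) := by
  set z := ⌊c - g 0⌋
  have hz₀ : (z : ℝ) ≤ c - g 0 := Int.floor_le _
  have hz₁ : c - g 0 < z + 1 := Int.lt_floor_add_one _
  obtain ⟨j, hj, hlo, hhi⟩ :=
    exists_mem_Ioo_of_step_lt (v := c - z) hstep (by linarith) (by linarith)
  exact ⟨j, hj, z, by linarith, by linarith⟩

theorem AddCircle.coe_add_int_one (x : ℝ) (z : ℤ) :
    ((x + z : ℝ) : AddCircle (1 : ℝ)) = x := by
  rw [AddCircle.coe_add, add_eq_left, AddCircle.coe_eq_zero_iff]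
  exact ⟨z, by simp⟩

theorem AddCircle.coe_mem_image_Ioo_of_add_int_mem {x c d : ℝ} {z : ℤ} (h : x + z ∈ Ioo c d) :
    (x : AddCircle (1 : ℝ)) ∈ (fun t : ℝ => (t : AddCircle (1 : ℝ))) '' Ioo c d :=
  ⟨x + z, h, AddCircle.coe_add_int_one x z⟩

theorem exists_increment_mem_Ioo (m : ℕ) (hm : 3 ≤ m) (B : ℝ) :
    ∃ k₀ : ℕ, k₀ + m < m ^ 2 ∧
      ∃ z : ℤ, B + (2 * k₀ + 1) / (m : ℝ) ^ 2 + z ∈ Ioo (1 / (m : ℝ)) (2 / m) := by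
  obtain ⟨M, hM⟩ := Nat.exists_eq_add_of_le (show m + 1 ≤ m ^ 2 by nlinarith)
  have hm' : (3 : ℝ) ≤ m := by exact_mod_cast hm
  have hMR : (m : ℝ) ^ 2 = m + 1 + M := by exact_mod_cast hM
  have hm0 : (0 : ℝ) < m := by linarith
  set g : ℕ → ℝ := fun k => B + (2 * k + 1) / (m : ℝ) ^ 2
  have hstep : ∀ k < M, g (k + 1) < g k + 1 / m := by
    intro k _
    have hinc : g (k + 1) - g k = 2 / (m : ℝ) ^ 2 := by
      simp only [g]; push_cast; ring
    have : 2 / (m : ℝ) ^ 2 < 1 / m := by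
      rw [div_lt_div_iff₀ (by positivity) hm0]; nlinarith
    linarith
  have hrange : g 0 + 1 ≤ g M := by
    have hadv : g M - g 0 = 2 * M / (m : ℝ) ^ 2 := by
      simp only [g]; push_cast; ring
    have : (1 : ℝ) ≤ 2 * M / (m : ℝ) ^ 2 := by
      rw [le_div_iff₀ (by positivity)]; nlinarith
    linarith
  obtain ⟨k₀, hk₀, z, hz⟩ := exists_add_int_mem_Ioo_of_step_lt hstep hrange (1 / m)
  refine ⟨k₀, by omega, z, ?_⟩
  rwa [show (1 : ℝ) / m + 1 / m = 2 / m by ring] at hz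

theorem exists_quadratic_mem_image_Ioo_of_three_le (m : ℕ) (hm3 : 3 ≤ m) (B c : ℝ) :
    ∃ k < m ^ 2,
      (((1 / (m : ℝ) ^ 2) * (k : ℝ) ^ 2 + B * (k : ℝ) : ℝ) : AddCircle (1 : ℝ)) ∈
        (fun t : ℝ => (t : AddCircle (1 : ℝ))) '' Ioo c (c + 5 / (m : ℝ)) := by
  obtain ⟨k₀, hk₀, z, hs_lo, hs_hi⟩ := exists_increment_mem_Ioo m hm3 B
  set s := B + (2 * k₀ + 1) / (m : ℝ) ^ 2 + z
  have hm0 : (0 : ℝ) < m := by positivity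
  have hm' : (3 : ℝ) ≤ m := by exact_mod_cast hm3
  set f : ℕ → ℝ := fun k => 1 / (m : ℝ) ^ 2 * (k : ℝ) ^ 2 + B * k
  -- lifting each increment by `z` turns the walk into one with increments `s + 2j / m²`
  set g : ℕ → ℝ := fun j => f (k₀ + j) + j * z
  have hg : ∀ j : ℕ, g j = f k₀ + j * s + j * (j - 1) / (m : ℝ) ^ 2 := by
    intro j
    simp only [g, f, s]
    push_cast
    field_simp
    ring
  have hstep : ∀ j < m, g (j + 1) < g j + 5 / m := by
    intro j hj
    have hjm : (j : ℝ) + 1 ≤ m := by exact_mod_cast hj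
    have hinc : g (j + 1) - g j = s + 2 * j / (m : ℝ) ^ 2 := by
      rw [hg, hg]; push_cast; ring
    have : 2 * (j : ℝ) / (m : ℝ) ^ 2 < 3 / m := by
      rw [div_lt_div_iff₀ (by positivity) hm0]; nlinarith
    linarith [show (2 : ℝ) / m + 3 / m = 5 / m by ring]
  have hrange : g 0 + 1 ≤ g m := by
    have hadv : g m - g 0 = m * s + (m - 1) / m := by
      rw [hg, hg]; push_cast; field_simp; ring
    have h₁ : 1 < m * s := by rwa [div_lt_iff₀' hm0] at hs_lo
    have h₂ : 0 ≤ ((m : ℝ) - 1) / m := by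
      apply div_nonneg _ hm0.le; linarith
    linarith
  obtain ⟨j, hj, z', hmem⟩ := exists_add_int_mem_Ioo_of_step_lt hstep hrange c
  refine ⟨k₀ + j, by nlinarith, AddCircle.coe_mem_image_Ioo_of_add_int_mem (z := j * z + z') ?_⟩
  convert hmem using 1
  simp only [g, f]
  push_cast
  ring

theorem exists_quadratic_mem_image_Ioo (m : ℕ) (hm : 2 ≤ m) (B c : ℝ) :
    ∃ k < m ^ 2,
      (((1 / (m : ℝ) ^ 2) * (k : ℝ) ^ 2 + B * (k : ℝ) : ℝ) : AddCircle (1 : ℝ)) ∈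
        (fun t : ℝ => (t : AddCircle (1 : ℝ))) '' Ioo c (c + 5 / (m : ℝ)) := by
  obtain rfl | hm3 : m = 2 ∨ 3 ≤ m := by omega
  · -- an interval of length `5 / 2` covers the whole circle
    refine ⟨0, by norm_num, AddCircle.coe_mem_image_Ioo_of_add_int_mem (z := ⌊c⌋ + 1) ?_⟩
    have := Int.floor_le c
    have := Int.lt_floor_add_one c
    constructor <;> push_cast <;> linarith
  · exact exists_quadratic_mem_image_Ioo_of_three_le m hm3 B c

/-- Elementary construction: for `n ≥ 4`, `m = ⌊√n⌋`, `A = 1/m²`, `P = {0,…,m²-1}`,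
the set `{(A k² + B k) mod 1 : k ∈ P}` meets every interval of length `5/m` on `ℝ/ℤ`. -/
theorem elementary_equidistribution (n : ℕ) (hn : 4 ≤ n) (B c : ℝ) :
    ∃ k < Nat.sqrt n ^ 2,
      (((1 / ((Nat.sqrt n : ℝ)) ^ 2) * (k : ℝ) ^ 2 + B * (k : ℝ) : ℝ) : AddCircle (1 : ℝ)) ∈
        (fun t : ℝ => (t : AddCircle (1 : ℝ))) '' Set.Ioo c (c + 5 / (Nat.sqrt n : ℝ)) :=
  exists_quadratic_mem_image_Ioo _ (Nat.le_sqrt.2 hn) B c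
end

section
/- Fix integers d ≥ 1 and even p ≥ 2, and ε ∈ (0,1). Define E = {x ∈ ℝ^d : dist(‖x‖_p^p, ℤ) < (1-ε)/2}, where ‖x‖_p^p = ∑_{i=1}^d |x_i|^p. Then |E ∩ [-R/2, R/2]^d| = (1-ε)R^d + O_{d,p}(R^{d-1}) for R ≥ 1; in particular the asymptotic density of E exists and equals 1 - ε. -/
/-!
Slice along the first coordinate. For fixed `y` in the `(d-1)`-dimensional cube, with
`c = ‖y‖_p^p` and `λ = 1 - ε`, the slice is
`{t ∈ [-R/2, R/2] : |t|^p ∈ ⋃ₘ (m - c - λ/2, m - c + λ/2)}`, so its length is a sum of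
increments `Ψ(a + k + λ) - Ψ(a + k)` of `Ψ(u) = |{t ∈ [-R/2, R/2] : |t|^p ≤ u}|`, which is
`min(R, 2u^{1/p})` for `u ≥ 0`. As `Ψ` is concave on `[0, ∞)`, each increment lies between `λ`
times the following unit increment and `λ` times the preceding one; both bounds telescope to
`λR`, so every slice has length `λR + O(1)`. Integrating over the cube of volume `R^(d-1)` gives
`λR^d + O(R^(d-1))`.
-/

open MeasureTheory Filter Set Topology
open scoped ENNReal

namespace ConcaveOn

variable {Φ : ℝ → ℝ} {s l : ℝ}

lemma mul_sub_le_sub_add (hΦ : ConcaveOn ℝ (Ici 0) Φ) (hs : 0 ≤ s) (hl0 : 0 < l)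
    (hl1 : l ≤ 1) : l * (Φ (s + 1) - Φ s) ≤ Φ (s + l) - Φ s := by
  have h := hΦ.neg.secant_mono (a := s) (x := s + l) (y := s + 1) hs
    (mem_Ici.2 (by linarith)) (mem_Ici.2 (by linarith)) (by linarith) (by linarith) (by linarith)
  simp only [Pi.neg_apply, add_sub_cancel_left, div_one] at h
  rw [div_le_iff₀ hl0] at h
  linarith

lemma sub_add_le_mul_sub (hΦ : ConcaveOn ℝ (Ici 0) Φ) (hs : 1 ≤ s) (hl0 : 0 < l) :
    Φ (s + l) - Φ s ≤ l * (Φ s - Φ (s - 1)) := by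
  have h := hΦ.neg.secant_mono (a := s) (x := s - 1) (y := s + l) (mem_Ici.2 (by linarith))
    (mem_Ici.2 (by linarith)) (mem_Ici.2 (by linarith)) (by linarith) (by linarith) (by linarith)
  simp only [Pi.neg_apply, add_sub_cancel_left, sub_sub_cancel_left] at h
  rw [le_div_iff₀ hl0] at h
  linarith

lemma mul_sub_le_sum_range (hΦ : ConcaveOn ℝ (Ici 0) Φ) (hs : 0 ≤ s) (hl0 : 0 < l)
    (hl1 : l ≤ 1) (n : ℕ) :
    l * (Φ (s + n) - Φ s) ≤ ∑ k ∈ Finset.range n, (Φ (s + k + l) - Φ (s + k)) := by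
  have htel := Finset.sum_range_sub (fun k : ℕ => Φ (s + k)) n
  simp only [Nat.cast_add, Nat.cast_one, Nat.cast_zero, add_zero, ← add_assoc] at htel
  rw [← htel, Finset.mul_sum]
  exact Finset.sum_le_sum fun k _ => hΦ.mul_sub_le_sub_add (by positivity) hl0 hl1

lemma sum_range_le_mul_sub (hΦ : ConcaveOn ℝ (Ici 0) Φ) (hs : 0 ≤ s) (hl0 : 0 < l) (n : ℕ) :
    ∑ k ∈ Finset.range n, (Φ (s + (k + 1) + l) - Φ (s + (k + 1))) ≤
      l * (Φ (s + n) - Φ s) := by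
  have htel := Finset.sum_range_sub (fun k : ℕ => Φ (s + k)) n
  simp only [Nat.cast_add, Nat.cast_one, Nat.cast_zero, add_zero] at htel
  rw [← htel, Finset.mul_sum]
  refine Finset.sum_le_sum fun k _ => ?_
  have h := hΦ.sub_add_le_mul_sub (s := s + (k + 1)) (by linarith [k.cast_nonneg (α := ℝ)]) hl0
  rwa [show s + (k + 1) - 1 = s + k by ring] at h

end ConcaveOn

lemma abs_toReal_setLIntegral_sub_le {α : Type*} [MeasurableSpace α] {μ : Measure α}
    {B : Set α} (hB : MeasurableSet B) (hμB : μ B ≠ ∞) {f : α → ℝ≥0∞} {a δ : ℝ}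
    (hf_ne_top : ∀ y ∈ B, f y ≠ ∞) (hf : ∀ y ∈ B, |(f y).toReal - a| ≤ δ) :
    |(∫⁻ y in B, f y ∂μ).toReal - a * (μ B).toReal| ≤ δ * (μ B).toReal := by
  rcases B.eq_empty_or_nonempty with rfl | ⟨y₀, hy₀⟩
  · simp
  have hupper : ∫⁻ y in B, f y ∂μ ≤ ENNReal.ofReal (a + δ) * μ B := by
    rw [← setLIntegral_const]
    refine setLIntegral_mono measurable_const fun y hy => ?_
    rw [← ENNReal.ofReal_toReal (hf_ne_top y hy)]
    exact ENNReal.ofReal_le_ofReal (by linarith [(abs_le.1 (hf y hy)).2])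
  have hlower : ENNReal.ofReal (a - δ) * μ B ≤ ∫⁻ y in B, f y ∂μ := by
    rw [← setLIntegral_const]
    refine setLIntegral_mono' hB fun y hy => ?_
    rw [ENNReal.ofReal_le_iff_le_toReal (hf_ne_top y hy)]
    linarith [(abs_le.1 (hf y hy)).1]
  have hfin : ∫⁻ y in B, f y ∂μ ≠ ∞ := ne_top_of_le_ne_top (by finiteness) hupper
  have hpos : 0 ≤ a + δ := by
    linarith [(abs_le.1 (hf y₀ hy₀)).2, ENNReal.toReal_nonneg (a := f y₀)]
  have hV0 : 0 ≤ (∫⁻ y in B, f y ∂μ).toReal := ENNReal.toReal_nonneg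
  have hμ0 : 0 ≤ (μ B).toReal := ENNReal.toReal_nonneg
  have hup := ENNReal.toReal_mono (by finiteness) hupper
  rw [ENNReal.toReal_mul, ENNReal.toReal_ofReal hpos] at hup
  have hlo : (a - δ) * (μ B).toReal ≤ (∫⁻ y in B, f y ∂μ).toReal := by
    rcases le_total (a - δ) 0 with h | h
    · nlinarith
    · have := ENNReal.toReal_mono hfin hlower
      rwa [ENNReal.toReal_mul, ENNReal.toReal_ofReal h] at this
  rw [abs_le]
  constructor <;> nlinarith

lemma volume_eq_lintegral_volume_cons {n : ℕ} {s : Set (Fin (n + 1) → ℝ)}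
    (hs : MeasurableSet s) : volume s = ∫⁻ y : Fin n → ℝ, volume {t : ℝ | Fin.cons t y ∈ s} := by
  have he := (volume_preserving_piFinSuccAbove (fun _ : Fin (n + 1) => ℝ) 0).symm
  rw [← he.measure_preimage hs.nullMeasurableSet, Measure.volume_eq_prod,
    Measure.prod_apply_symm (hs.preimage (MeasurableEquiv.measurable _))]
  congr! with y
  simp only [MeasurableEquiv.piFinSuccAbove_symm_apply, Fin.insertNthEquiv_zero]
  rfl

lemma volume_cube (n : ℕ) (R : ℝ) :
    volume {y : Fin n → ℝ | ∀ i, y i ∈ Icc (-R / 2) (R / 2)} = ENNReal.ofReal R ^ n := by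
  have hpi : {y : Fin n → ℝ | ∀ i, y i ∈ Icc (-R / 2) (R / 2)} =
      univ.pi fun _ => Icc (-R / 2) (R / 2) := by
    ext
    rw [mem_ofPred_eq, mem_univ_pi]
  rw [hpi, volume_pi_pi, Real.volume_Icc, Finset.prod_const, Finset.card_univ, Fintype.card_fin]
  ring_nf

lemma tendsto_div_pow_of_abs_sub_le {f : ℝ → ℝ} {a C : ℝ} {n : ℕ}
    (h : ∀ R : ℝ, 1 ≤ R → |f R - a * R ^ (n + 1)| ≤ C * R ^ n) :
    Tendsto (fun R => f R / R ^ (n + 1)) atTop (𝓝 a) := by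
  refine tendsto_iff_norm_sub_tendsto_zero.2 (squeeze_zero' (Eventually.of_forall fun _ =>
    norm_nonneg _) ?_ ((tendsto_const_nhds (x := C)).div_atTop tendsto_id))
  filter_upwards [eventually_ge_atTop 1] with R hR
  have hR0 : 0 < R := by linarith
  dsimp only [id]
  rw [Real.norm_eq_abs, show f R / R ^ (n + 1) - a = (f R - a * R ^ (n + 1)) / R ^ (n + 1) by
    field_simp, abs_div, abs_of_pos (pow_pos hR0 _), div_le_iff₀ (by positivity)]
  calc |f R - a * R ^ (n + 1)| ≤ C * R ^ n := h R hR
    _ = C / R * R ^ (n + 1) := by field_simp; ring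

-- The length of `{t ∈ [-R/2, R/2] : |t|^p ≤ u}`; `max u 0` keeps `rpow` off negative bases.
noncomputable def sublevelLength (p : ℕ) (R u : ℝ) : ℝ := min R (2 * max u 0 ^ (p : ℝ)⁻¹)

section sublevelLength

variable {p : ℕ} {R u v : ℝ}

lemma sublevelLength_le : sublevelLength p R u ≤ R := min_le_left _ _

lemma sublevelLength_nonneg (hR : 0 ≤ R) : 0 ≤ sublevelLength p R u :=
  le_min hR (by positivity)

lemma sublevelLength_mono : Monotone (sublevelLength p R) := fun _ _ h =>
  min_le_min le_rfl <| mul_le_mul_of_nonneg_left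
    (Real.rpow_le_rpow (le_max_right _ _) (max_le_max h le_rfl) (by positivity)) zero_le_two

lemma sublevelLength_of_nonpos (hp : p ≠ 0) (hR : 0 ≤ R) (hu : u ≤ 0) :
    sublevelLength p R u = 0 := by
  rw [sublevelLength, max_eq_right hu, Real.zero_rpow (by positivity), mul_zero, min_eq_right hR]

lemma sublevelLength_of_le (hp : p ≠ 0) (hR : 0 ≤ R) (hu : (R / 2) ^ p ≤ u) :
    sublevelLength p R u = R := by
  have hu0 : 0 ≤ u := le_trans (by positivity) hu
  refine min_eq_left ?_
  rw [max_eq_left hu0, ← div_le_iff₀' zero_lt_two,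
    Real.le_rpow_inv_iff_of_pos (by positivity) hu0 (by positivity), Real.rpow_natCast]
  exact hu

lemma sublevelLength_le_two_mul (hp : p ≠ 0) (hu : 1 ≤ u) : sublevelLength p R u ≤ 2 * u := by
  have hp1 : (1 : ℝ) ≤ p := Nat.one_le_cast.2 (Nat.one_le_iff_ne_zero.2 hp)
  refine (min_le_right _ _).trans ?_
  rw [max_eq_left (by linarith)]
  gcongr
  exact Real.rpow_le_self_of_one_le hu (inv_le_one_of_one_le₀ hp1)

lemma concaveOn_sublevelLength (hp : p ≠ 0) : ConcaveOn ℝ (Ici 0) (sublevelLength p R) := by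
  have hp1 : (1 : ℝ) ≤ p := Nat.one_le_cast.2 (Nat.one_le_iff_ne_zero.2 hp)
  have hpow : ConcaveOn ℝ (Ici 0) fun u : ℝ => 2 * u ^ (p : ℝ)⁻¹ :=
    (Real.concaveOn_rpow (by positivity) (inv_le_one_of_one_le₀ hp1)).smul zero_le_two
  refine ((concaveOn_const R (convex_Ici 0)).inf hpow).congr fun u hu => ?_
  simp [sublevelLength, max_eq_left (mem_Ici.1 hu)]

lemma abs_pow_le_iff_le_rpow_inv (hp : p ≠ 0) (hu : 0 ≤ u) (t : ℝ) :
    |t| ^ p ≤ u ↔ |t| ≤ u ^ (p : ℝ)⁻¹ := by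
  rw [Real.le_rpow_inv_iff_of_pos (abs_nonneg t) hu (by positivity), Real.rpow_natCast]

lemma abs_pow_lt_iff_lt_rpow_inv (hp : p ≠ 0) (hu : 0 ≤ u) (t : ℝ) :
    |t| ^ p < u ↔ |t| < u ^ (p : ℝ)⁻¹ := by
  rw [Real.lt_rpow_inv_iff_of_pos (abs_nonneg t) hu (by positivity), Real.rpow_natCast]

lemma mem_Icc_neg_half_iff (R t : ℝ) : t ∈ Icc (-R / 2) (R / 2) ↔ |t| ≤ R / 2 := by
  rw [abs_le, neg_div, mem_Icc]

lemma volume_Icc_inter_abs_pow_le (hp : p ≠ 0) (hR : 0 ≤ R) (u : ℝ) :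
    volume (Icc (-R / 2) (R / 2) ∩ {t | |t| ^ p ≤ u}) =
      ENNReal.ofReal (sublevelLength p R u) := by
  rcases lt_or_ge u 0 with hu | hu
  · have hempty : Icc (-R / 2) (R / 2) ∩ {t | |t| ^ p ≤ u} = ∅ :=
      eq_empty_of_forall_notMem fun t ht => (ht.2.trans_lt hu).not_ge (by positivity)
    rw [hempty, sublevelLength_of_nonpos hp hR hu.le, measure_empty, ENNReal.ofReal_zero]
  · set r := min (R / 2) (u ^ (p : ℝ)⁻¹)
    have hset : Icc (-R / 2) (R / 2) ∩ {t | |t| ^ p ≤ u} = Icc (-r) r := by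
      ext t
      rw [mem_inter_iff, mem_Icc_neg_half_iff, mem_ofPred_eq, abs_pow_le_iff_le_rpow_inv hp hu,
        mem_Icc, ← abs_le, le_min_iff]
    rw [hset, Real.volume_Icc, sublevelLength, max_eq_left hu, sub_neg_eq_add, ← two_mul,
      mul_min_of_nonneg _ _ zero_le_two, mul_div_cancel₀ _ two_ne_zero]

lemma volume_Icc_inter_abs_pow_lt (hp : p ≠ 0) (hR : 0 ≤ R) (u : ℝ) :
    volume (Icc (-R / 2) (R / 2) ∩ {t | |t| ^ p < u}) =
      ENNReal.ofReal (sublevelLength p R u) := by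
  rcases le_or_gt u 0 with hu | hu
  · have hempty : Icc (-R / 2) (R / 2) ∩ {t | |t| ^ p < u} = ∅ :=
      eq_empty_of_forall_notMem fun t ht => (ht.2.trans_le hu).not_ge (by positivity)
    rw [hempty, sublevelLength_of_nonpos hp hR hu, measure_empty, ENNReal.ofReal_zero]
  · rw [sublevelLength, max_eq_left hu.le]
    set r := u ^ (p : ℝ)⁻¹
    have hmem : ∀ t, t ∈ Icc (-R / 2) (R / 2) ∩ {t | |t| ^ p < u} ↔ |t| ≤ R / 2 ∧ |t| < r :=
      fun t => by
        rw [mem_inter_iff, mem_Icc_neg_half_iff, mem_ofPred_eq, abs_pow_lt_iff_lt_rpow_inv hp hu.le]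
    rcases le_or_gt r (R / 2) with hr | hr
    · have hset : Icc (-R / 2) (R / 2) ∩ {t | |t| ^ p < u} = Ioo (-r) r := by
        ext t
        rw [hmem, mem_Ioo, ← abs_lt]
        exact ⟨And.right, fun h => ⟨h.le.trans hr, h⟩⟩
      rw [hset, Real.volume_Ioo, min_eq_right (by linarith)]
      ring_nf
    · have hset : Icc (-R / 2) (R / 2) ∩ {t | |t| ^ p < u} = Icc (-R / 2) (R / 2) := by
        ext t
        rw [hmem, mem_Icc_neg_half_iff]
        exact ⟨And.left, fun h => ⟨h, h.trans_lt hr⟩⟩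
      rw [hset, Real.volume_Icc, min_eq_left (by linarith)]
      ring_nf

lemma volume_Icc_inter_abs_pow_mem_Ioo (hp : p ≠ 0) (hR : 0 ≤ R) (huv : u < v) :
    volume (Icc (-R / 2) (R / 2) ∩ {t | |t| ^ p ∈ Ioo u v}) =
      ENNReal.ofReal (sublevelLength p R v - sublevelLength p R u) := by
  have hset : Icc (-R / 2) (R / 2) ∩ {t | |t| ^ p ∈ Ioo u v} =
      (Icc (-R / 2) (R / 2) ∩ {t | |t| ^ p < v}) \
        (Icc (-R / 2) (R / 2) ∩ {t | |t| ^ p ≤ u}) := by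
    ext t
    simp only [mem_inter_iff, Set.mem_sdiff, mem_ofPred_eq, mem_Ioo, not_and, not_le]
    tauto
  have hmeas : MeasurableSet (Icc (-R / 2) (R / 2) ∩ {t : ℝ | |t| ^ p ≤ u}) :=
    measurableSet_Icc.inter (measurableSet_le (by fun_prop) measurable_const)
  have hsub : Icc (-R / 2) (R / 2) ∩ {t | |t| ^ p ≤ u} ⊆
      Icc (-R / 2) (R / 2) ∩ {t | |t| ^ p < v} :=
    fun t ht => ⟨ht.1, lt_of_le_of_lt ht.2 huv⟩
  rw [hset, measure_sdiff hsub hmeas.nullMeasurableSet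
      (by rw [volume_Icc_inter_abs_pow_le hp hR]; exact ENNReal.ofReal_ne_top),
    volume_Icc_inter_abs_pow_lt hp hR, volume_Icc_inter_abs_pow_le hp hR,
    ← ENNReal.ofReal_sub _ (sublevelLength_nonneg hR)]

-- Concavity cannot be used on both sides of the windows `k = 0, 1`, which reach below `u = 1`;
-- they are bounded by `sublevelLength p R 2 ≤ 4` instead.
lemma abs_sum_sublevelLength_sub_le (hp : p ≠ 0) (hR : 0 ≤ R) {l a : ℝ} (hl0 : 0 < l)
    (hl1 : l ≤ 1) (ha0 : -1 ≤ a) (ha1 : a < 0) {M : ℕ} (hM : (R / 2) ^ p ≤ M) :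
    |∑ k ∈ Finset.range (M + 2), (sublevelLength p R (a + k + l) - sublevelLength p R (a + k))
      - l * R| ≤ 4 := by
  have hs : 0 ≤ a + 1 := by linarith
  have hΨ := concaveOn_sublevelLength (R := R) hp
  have hΨs : sublevelLength p R (a + 1) ≤ 2 := (sublevelLength_mono (by linarith)).trans
    ((sublevelLength_le_two_mul hp le_rfl).trans_eq (mul_one 2))
  have hΨs0 : 0 ≤ sublevelLength p R (a + 1) := sublevelLength_nonneg hR
  have hshift : ∀ k : ℕ, a + ((k + 1 : ℕ) : ℝ) = a + 1 + k := fun k => by push_cast; ring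
  have hlow : l * R - 2 ≤ ∑ k ∈ Finset.range (M + 2),
      (sublevelLength p R (a + k + l) - sublevelLength p R (a + k)) := by
    have h := hΨ.mul_sub_le_sum_range hs hl0 hl1 (M + 1)
    rw [sublevelLength_of_le hp hR (by push_cast; linarith)] at h
    have hfirst : 0 ≤ sublevelLength p R (a + l) - sublevelLength p R a :=
      sub_nonneg.2 (sublevelLength_mono (by linarith))
    simp only [Finset.sum_range_succ' _ (M + 1), hshift, Nat.cast_zero, add_zero]
    nlinarith
  have hupp : ∑ k ∈ Finset.range (M + 2),
      (sublevelLength p R (a + k + l) - sublevelLength p R (a + k)) ≤ l * R + 4 := by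
    have h := hΨ.sum_range_le_mul_sub hs hl0 M
    have hfirst : sublevelLength p R (a + l) ≤ sublevelLength p R (a + 1) :=
      sublevelLength_mono (by linarith)
    have hsecond : sublevelLength p R (a + 1 + l) ≤ 4 :=
      (sublevelLength_mono (by linarith)).trans
        ((sublevelLength_le_two_mul hp one_le_two).trans_eq (by norm_num))
    have htop : sublevelLength p R (a + 1 + M) ≤ R := sublevelLength_le
    simp only [Finset.sum_range_succ', hshift, Nat.cast_zero, add_zero,
      sublevelLength_of_nonpos hp hR ha1.le]
    push_cast
    nlinarith
  rw [abs_le]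
  constructor <;> linarith

end sublevelLength

section slice

variable {p : ℕ} {R l c : ℝ}

lemma slice_eq_biUnion (hl1 : l ≤ 1) {m₀ : ℤ} (hm₀ : c + l / 2 - 1 ≤ m₀)
    (hm₀' : m₀ < c + l / 2) {M : ℕ} (hM : (R / 2) ^ p ≤ M) :
    Icc (-R / 2) (R / 2) ∩ {t | ∃ m : ℤ, |c + |t| ^ p - m| < l / 2} =
      ⋃ k ∈ Finset.range (M + 2), Icc (-R / 2) (R / 2) ∩
        {t | |t| ^ p ∈ Ioo (m₀ - c - l / 2 + k) (m₀ - c - l / 2 + k + l)} := by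
  ext t
  simp only [mem_inter_iff, mem_ofPred_eq, mem_iUnion, Finset.mem_range, mem_Ioo, exists_prop,
    abs_lt]
  constructor
  · rintro ⟨ht, m, hm⟩
    have htp : |t| ^ p ≤ M :=
      (pow_le_pow_left₀ (abs_nonneg t) ((mem_Icc_neg_half_iff R t).1 ht) p).trans hM
    have hpos : 0 ≤ |t| ^ p := by positivity
    have hm₀m : m₀ ≤ m :=
      Int.lt_add_one_iff.1 (by exact_mod_cast (by linarith : (m₀ : ℝ) < m + 1))
    obtain ⟨k, rfl⟩ : ∃ k : ℕ, m = m₀ + k := ⟨(m - m₀).toNat, by omega⟩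
    push_cast at hm
    have hkM : (k : ℝ) < M + 2 := by linarith
    exact ⟨k, by exact_mod_cast hkM, ht, by linarith, by linarith⟩
  · rintro ⟨k, hk, ht, h1, h2⟩
    exact ⟨ht, m₀ + k, by push_cast; constructor <;> linarith⟩

lemma volume_slice_eq_ofReal_sum (hp : p ≠ 0) (hR : 0 ≤ R) (hl0 : 0 < l) (hl1 : l ≤ 1) {m₀ : ℤ}
    (hm₀ : c + l / 2 - 1 ≤ m₀) (hm₀' : m₀ < c + l / 2) {M : ℕ} (hM : (R / 2) ^ p ≤ M) :
    volume (Icc (-R / 2) (R / 2) ∩ {t | ∃ m : ℤ, |c + |t| ^ p - m| < l / 2}) =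
      ENNReal.ofReal (∑ k ∈ Finset.range (M + 2),
        (sublevelLength p R (m₀ - c - l / 2 + k + l) -
          sublevelLength p R (m₀ - c - l / 2 + k))) := by
  have hdisj : PairwiseDisjoint (Finset.range (M + 2) : Set ℕ) fun k : ℕ =>
      Icc (-R / 2) (R / 2) ∩ {t | |t| ^ p ∈ Ioo (m₀ - c - l / 2 + k) (m₀ - c - l / 2 + k + l)} := by
    intro j _ k _ hjk
    refine Set.disjoint_left.2 fun t ⟨_, hj⟩ ⟨_, hk⟩ => hjk ?_
    have hjk' : (j : ℝ) < k + 1 := by linarith [hj.1, hk.2]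
    have hkj' : (k : ℝ) < j + 1 := by linarith [hj.2, hk.1]
    have : j < k + 1 := by exact_mod_cast hjk'
    have : k < j + 1 := by exact_mod_cast hkj'
    omega
  have hmeas : ∀ k ∈ Finset.range (M + 2), MeasurableSet (Icc (-R / 2) (R / 2) ∩
      {t : ℝ | |t| ^ p ∈ Ioo (m₀ - c - l / 2 + k) (m₀ - c - l / 2 + k + l)}) := fun k _ =>
    measurableSet_Icc.inter (measurableSet_Ioo.preimage (by fun_prop))
  rw [slice_eq_biUnion hl1 hm₀ hm₀' hM, measure_biUnion_finset hdisj hmeas,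
    ENNReal.ofReal_sum_of_nonneg fun k _ => sub_nonneg.2 (sublevelLength_mono (by linarith))]
  exact Finset.sum_congr rfl fun k _ => volume_Icc_inter_abs_pow_mem_Ioo hp hR (by linarith)

lemma abs_toReal_volume_slice_sub_le (hp : p ≠ 0) (hR : 0 ≤ R) (hl0 : 0 < l) (hl1 : l ≤ 1)
    (c : ℝ) :
    |(volume (Icc (-R / 2) (R / 2) ∩ {t | ∃ m : ℤ, |c + |t| ^ p - m| < l / 2})).toReal - l * R|
      ≤ 4 := by
  have hm₀ : c + l / 2 - 1 ≤ ((⌈c + l / 2⌉ - 1 : ℤ) : ℝ) := by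
    push_cast; linarith [Int.le_ceil (c + l / 2)]
  have hm₀' : (((⌈c + l / 2⌉ - 1 : ℤ)) : ℝ) < c + l / 2 := by
    push_cast; linarith [Int.ceil_lt_add_one (c + l / 2)]
  rw [volume_slice_eq_ofReal_sum hp hR hl0 hl1 hm₀ hm₀' (Nat.le_ceil _), ENNReal.toReal_ofReal
    (Finset.sum_nonneg fun k _ => sub_nonneg.2 (sublevelLength_mono (by linarith)))]
  refine abs_sum_sublevelLength_sub_le hp hR hl0 hl1 ?_ ?_ (Nat.le_ceil _) <;> linarith

end slice

lemma abs_toReal_volume_inter_cube_sub_le {p : ℕ} (hp : p ≠ 0) {R l : ℝ} (hR : 0 ≤ R)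
    (hl0 : 0 < l) (hl1 : l ≤ 1) (n : ℕ) :
    |(volume ({x : Fin (n + 1) → ℝ | ∃ m : ℤ, |(∑ i, |x i| ^ p) - (m : ℝ)| < l / 2} ∩
        {x | ∀ i, x i ∈ Icc (-R / 2) (R / 2)})).toReal - l * R ^ (n + 1)| ≤ 4 * R ^ n := by
  set E := {x : Fin (n + 1) → ℝ | ∃ m : ℤ, |(∑ i, |x i| ^ p) - (m : ℝ)| < l / 2} ∩
    {x | ∀ i, x i ∈ Icc (-R / 2) (R / 2)} with hE
  set cube : Set (Fin n → ℝ) := {y | ∀ i, y i ∈ Icc (-R / 2) (R / 2)}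
  set slice : (Fin n → ℝ) → Set ℝ := fun y =>
    Icc (-R / 2) (R / 2) ∩ {t | ∃ m : ℤ, |(∑ i, |y i| ^ p) + |t| ^ p - m| < l / 2} with hslice_def
  have hcube : MeasurableSet cube := by measurability
  have hmeas : MeasurableSet E := by measurability
  have hslice : ∀ y, volume {t : ℝ | Fin.cons t y ∈ E} = cube.indicator (volume ∘ slice) y := by
    intro y
    by_cases hy : y ∈ cube
    · rw [indicator_of_mem hy, Function.comp_apply]
      congr 1
      ext t
      simp only [hE, hslice_def, mem_inter_iff, mem_ofPred_eq, Fin.sum_univ_succ,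
        Fin.forall_fin_succ, Fin.cons_zero, Fin.cons_succ, add_comm (|t| ^ p)]
      exact ⟨fun h => ⟨h.2.1, h.1⟩, fun h => ⟨h.2, h.1, hy⟩⟩
    · rw [indicator_of_notMem hy]
      exact measure_mono_null (fun t ht => hy fun i => by simpa using ht.2 i.succ) measure_empty
  have h := abs_toReal_setLIntegral_sub_le (f := volume ∘ slice) hcube
    (by rw [volume_cube]; finiteness)
    (fun y _ => ((measure_mono inter_subset_left).trans_lt measure_Icc_lt_top).ne)
    fun y _ => abs_toReal_volume_slice_sub_le hp hR hl0 hl1 _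
  rw [volume_cube, ENNReal.toReal_pow, ENNReal.toReal_ofReal hR, mul_assoc, ← pow_succ'] at h
  rwa [volume_eq_lintegral_volume_cons hmeas, lintegral_congr hslice, lintegral_indicator hcube]

theorem density_of_annuli_general (d p : ℕ) (hd : 1 ≤ d) (hp : 2 ≤ p) :
    ∃ C : ℝ, ∀ ε : ℝ, 0 < ε → ε < 1 →
      (∀ R : ℝ, 1 ≤ R →
        |(volume ({x : Fin d → ℝ | ∃ m : ℤ, |(∑ i, |x i| ^ p) - (m : ℝ)| < (1 - ε) / 2} ∩
            {x | ∀ i, x i ∈ Set.Icc (-R / 2) (R / 2)})).toReal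
          - (1 - ε) * R ^ d| ≤ C * R ^ (d - 1)) ∧
      Tendsto (fun R : ℝ =>
          (volume ({x : Fin d → ℝ | ∃ m : ℤ, |(∑ i, |x i| ^ p) - (m : ℝ)| < (1 - ε) / 2} ∩
            {x | ∀ i, x i ∈ Set.Icc (-R / 2) (R / 2)})).toReal / R ^ d)
        atTop (nhds (1 - ε)) := by
  obtain ⟨n, rfl⟩ : ∃ n, d = n + 1 := ⟨d - 1, by omega⟩
  have hbound := fun ε (hε0 : 0 < ε) (hε1 : ε < 1) (R : ℝ) (hR : 1 ≤ R) =>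
    abs_toReal_volume_inter_cube_sub_le (p := p) (by omega) (R := R) (l := 1 - ε) (by linarith)
      (by linarith) (by linarith) n
  exact ⟨4, fun ε hε0 hε1 =>
    ⟨hbound ε hε0 hε1, tendsto_div_pow_of_abs_sub_le (hbound ε hε0 hε1)⟩⟩

/-- For even `p ≥ 2` and `ε ∈ (0,1)`, the set `E = {x ∈ ℝᵈ : dist(‖x‖_p^p, ℤ) < (1-ε)/2}`
satisfies `|E ∩ [-R/2,R/2]^d| = (1-ε)R^d + O_{d,p}(R^{d-1})`; in particular its asymptotic
density exists and equals `1 - ε`. Here `‖x‖_p^p = ∑ i, |x i|^p`. -/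
theorem density_of_annuli (d p : ℕ) (hd : 1 ≤ d) (hp : 2 ≤ p) (hpe : Even p) :
    ∃ C : ℝ, ∀ ε : ℝ, 0 < ε → ε < 1 →
      (∀ R : ℝ, 1 ≤ R →
        |(volume ({x : Fin d → ℝ | ∃ m : ℤ, |(∑ i, |x i| ^ p) - (m : ℝ)| < (1 - ε) / 2} ∩
            {x | ∀ i, x i ∈ Set.Icc (-R / 2) (R / 2)})).toReal
          - (1 - ε) * R ^ d| ≤ C * R ^ (d - 1)) ∧
      Tendsto (fun R : ℝ =>
          (volume ({x : Fin d → ℝ | ∃ m : ℤ, |(∑ i, |x i| ^ p) - (m : ℝ)| < (1 - ε) / 2} ∩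
            {x | ∀ i, x i ∈ Set.Icc (-R / 2) (R / 2)})).toReal / R ^ d)
        atTop (nhds (1 - ε)) :=
  density_of_annuli_general d p hd hp
end
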